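/- arXiv:1710.09830 — 2 statements merged into one kernel-verified Lean document; each statement's English description precedes it below -/
import Mathlib

section
/- Let R be a commutative ring, S a multiplicative set, and M, N R-modules with M finitely presented. Then Hom_{S⁻¹R}(S⁻¹M, S⁻¹N) ≅ S⁻¹ Hom_R(M, N) as S⁻¹R-modules. -/
theorem hom_localization_equiv {R : Type*} [CommRing R] (S : Submonoid R)
    (M N : Type*) [AddCommGroup M] [Module R M] [AddCommGroup N] [Module R N]
    [Module.FinitePresentation R M] :
    Nonempty ((LocalizedModule S (M →ₗ[R] N)) ≃ₗ[Localization S]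
      ((LocalizedModule S M) →ₗ[Localization S] (LocalizedModule S N))) :=
  ⟨(Module.FinitePresentation.linearEquivMapExtendScalars S).extendScalarsOfIsLocalization S
    (Localization S)⟩
end

section
/- A commutative ring R is Artinian if and only if R has finite length as a module over itself. -/
open Submodule

private lemma noeth_of_torsion {R : Type*} [CommRing R] (I : Ideal R)
    (hR : IsSemisimpleRing (R ⧸ I)) {M : Type*} [AddCommGroup M] [Module R M]
    (hM : Module.IsTorsionBySet R M I) [IsArtinian R M] : IsNoetherian R M := by
  letI := hM.module
  haveI : IsScalarTower R (R ⧸ I) M := hM.isScalarTower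
  haveI : IsArtinian (R ⧸ I) M := isArtinian_of_tower R ‹_›
  haveI : IsNoetherian (R ⧸ I) M :=
    (IsSemisimpleModule.finite_tfae (R := R ⧸ I) (M := M)).out 2 1 |>.mp ‹_›
  have key : ∀ (p : Submodule R M) (c : R ⧸ I) (x : M), x ∈ p → c • x ∈ p := by
    intro p c x hx
    obtain ⟨r, rfl⟩ := Ideal.Quotient.mk_surjective c
    rw [hM.mk_smul]
    exact p.smul_mem r hx
  let e : Submodule R M ↪o Submodule (R ⧸ I) M :=
    { toFun := fun p =>
        { carrier := p
          add_mem' := fun h1 h2 => p.add_mem h1 h2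
          zero_mem' := p.zero_mem
          smul_mem' := fun c x h => key p c x h }
      inj' := fun p q h => by
        ext x
        exact SetLike.ext_iff.mp h x
      map_rel_iff' := Iff.rfl }
  exact isNoetherian_mk ⟨e.dual.wellFounded (IsNoetherian.wf ‹_›)⟩

theorem artinian_iff_finite_length {R : Type*} [CommRing R] :
    IsArtinianRing R ↔ IsFiniteLength R R := by
  rw [isFiniteLength_iff_isNoetherian_isArtinian]
  refine ⟨fun h => ⟨?_, h⟩, fun h => h.2⟩
  haveI : IsArtinianRing R := h
  set J : Ideal R := (⊥ : Ideal R).jacobson with hJ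
  have hss : IsSemisimpleRing (R ⧸ J) := by
    haveI : IsReduced (R ⧸ J) :=
      (Ideal.isRadical_iff_quotient_reduced J).mp (Ideal.isRadical_jacobson ⊥)
    exact IsArtinianRing.isSemisimpleRing_of_isReduced (R ⧸ J)
  obtain ⟨n, hn⟩ := IsArtinianRing.isNilpotent_jacobson_bot (R := R)
  have main : ∀ k : ℕ, IsNoetherian R (R ⧸ (J ^ k : Ideal R)) := by
    intro k
    induction k with
    | zero =>
        haveI : Subsingleton (R ⧸ (J ^ 0 : Ideal R)) := by
          rw [pow_zero, Ideal.one_eq_top]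
          exact Submodule.Quotient.subsingleton_iff.mpr rfl
        infer_instance
    | succ k ih =>
        have hle : (J ^ (k + 1) : Ideal R) ≤ J ^ k := Ideal.pow_le_pow_right k.le_succ
        set S : Submodule R (R ⧸ (J ^ (k + 1) : Ideal R)) :=
          Submodule.map ((J ^ (k + 1) : Ideal R).mkQ) (J ^ k : Ideal R) with hS
        have htor : Module.IsTorsionBySet R S (J : Set R) := by
          rintro ⟨x, hx⟩ ⟨r, hr⟩
          obtain ⟨y, hy, rfl⟩ := Submodule.mem_map.mp hx
          apply Subtype.ext
          show r • (J ^ (k + 1) : Ideal R).mkQ y = 0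
          rw [← map_smul, Submodule.mkQ_apply, Submodule.Quotient.mk_eq_zero]
          rw [pow_succ']
          exact Submodule.smul_mem_smul hr hy
        haveI hSnoeth : IsNoetherian R S := noeth_of_torsion J hss htor
        haveI : IsNoetherian R ((R ⧸ (J ^ (k + 1) : Ideal R)) ⧸ S) :=
          isNoetherian_of_linearEquiv
            (Submodule.quotientQuotientEquivQuotient _ _ hle).symm
        exact (isNoetherian_iff_submodule_quotient S).mpr ⟨hSnoeth, ‹_›⟩
  have hbot : (J ^ n : Ideal R) = ⊥ := hn
  have := main n
  rw [hbot] at this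
  exact isNoetherian_of_linearEquiv (Submodule.quotEquivOfEqBot (⊥ : Submodule R R) rfl)
end
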